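/- arXiv:2206.15029 — 5 statements merged into one kernel-verified Lean document; each statement's English description precedes it below -/
import Mathlib

section
/- For every d ≥ 1 and every d-tuple of integers a = (a_1,…,a_d), the refined Ehrhart series of the d-dimensional cross-polytope satisfies, in the power series ring (ℤ[q,q⁻¹])[[t]]: E^a_{Ξ_d}(t,q) · ∏_{j=1}^d (1−q^{a_j} t)(1−q^{−a_j} t) = (1+t)^d (1−t)^{d−1}. -/
/-!
Splitting a lattice point of `rΞ_{d+1}` into its first coordinate `m` and a point of
`(r - |m|)Ξ_d` gives `E_{d+1}^a = G(a₁) · E_d^{(a₂,…,a_{d+1})}` with the two-sided geometric series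
`G(c) = ∑_{m ∈ ℤ} q^{mc} t^{|m|} = 1/(1 - q^c t) + 1/(1 - q^{-c} t) - 1
  = (1 - t²)/((1 - q^c t)(1 - q^{-c} t))`.
Since `E_0 = 1/(1 - t)`, induction gives
`E_d^a · ∏_j (1 - q^{a_j} t)(1 - q^{-a_j} t) = (1 - t²)^d/(1 - t)`, and `1 - t` cancels once `d ≥ 1`.
-/

open PowerSeries Finset
open LaurentPolynomial (T T_add T_zero T_pow)
open scoped LaurentPolynomial

/-- The refined Ehrhart series of the `d`-dimensional cross-polytope with respect to an
integer weight vector `a`: the coefficient of `t^r` is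
`∑_{v ∈ ℤ^d, |v₁|+⋯+|v_d| ≤ r} q^{v·a}`, a Laurent polynomial in `q`. -/
noncomputable def refinedEhrhartCross (d : ℕ) (a : Fin d → ℤ) :
    PowerSeries (LaurentPolynomial ℤ) :=
  PowerSeries.mk fun r : ℕ =>
    ∑ v ∈ (Fintype.piFinset fun _ : Fin d => Finset.Icc (-(r : ℤ)) (r : ℤ)).filter
        (fun v => ∑ i, |v i| ≤ (r : ℤ)),
      LaurentPolynomial.T (∑ i, v i * a i)

theorem one_sub_C_mul_X_mul_rescale_mk_one {R : Type*} [CommRing R] (u : R) :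
    (1 - C u * X) * rescale u (PowerSeries.mk 1) = 1 := by
  rw [← rescale_X, ← map_one (rescale u), ← map_sub, ← map_mul, mul_comm,
    mk_one_mul_one_sub_eq_one, map_one]

noncomputable def twoSidedGeometric (c : ℤ) : ℤ[T;T⁻¹]⟦X⟧ :=
  rescale (T c) (PowerSeries.mk 1) + rescale (T (-c)) (PowerSeries.mk 1) - 1

theorem twoSidedGeometric_mul (c : ℤ) :
    twoSidedGeometric c * ((1 - C (T c : ℤ[T;T⁻¹]) * X) * (1 - C (T (-c)) * X)) =
      1 - X ^ 2 := by
  have hc := one_sub_C_mul_X_mul_rescale_mk_one (T c : ℤ[T;T⁻¹])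
  have hnc := one_sub_C_mul_X_mul_rescale_mk_one (T (-c) : ℤ[T;T⁻¹])
  have hinv : C (T c : ℤ[T;T⁻¹]) * C (T (-c)) = 1 := by
    rw [← map_mul, ← T_add, add_neg_cancel, T_zero, map_one]
  unfold twoSidedGeometric
  linear_combination (1 - C (T (-c)) * X) * hc + (1 - C (T c) * X) * hnc - X ^ 2 * hinv

theorem coeff_twoSidedGeometric (c : ℤ) (k : ℕ) :
    coeff k (twoSidedGeometric c) = if k = 0 then 1 else T (k * c) + T (k * -c) := by
  simp only [twoSidedGeometric, map_add, map_sub, coeff_rescale, coeff_mk, coeff_one, T_pow]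
  split_ifs <;> simp_all

theorem sum_Icc_neg_eq_sum_range {M : Type*} [AddCommMonoid M] (g : ℤ → M) (r : ℕ) :
    ∑ m ∈ Icc (-(r : ℤ)) r, g m =
      ∑ k ∈ range (r + 1), if k = 0 then g 0 else g k + g (-k) := by
  induction r with
  | zero => simp
  | succ r ih =>
    have hsplit : Icc (-((r + 1 : ℕ) : ℤ)) (r + 1 : ℕ) =
        insert ((r + 1 : ℕ) : ℤ) (insert (-((r + 1 : ℕ) : ℤ)) (Icc (-(r : ℤ)) r)) := by
      ext m; simp only [mem_insert, mem_Icc]; omega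
    rw [hsplit, sum_insert (by simp; omega), sum_insert (by simp), ih,
      sum_range_succ _ (r + 1), if_neg r.succ_ne_zero]
    abel

noncomputable def crossPolytopePoints (d r : ℕ) : Finset (Fin d → ℤ) :=
  (Fintype.piFinset fun _ : Fin d => Icc (-(r : ℤ)) r).filter fun v => ∑ i, |v i| ≤ r

theorem mem_crossPolytopePoints {d r : ℕ} {v : Fin d → ℤ} :
    v ∈ crossPolytopePoints d r ↔ ∑ i, |v i| ≤ r := by
  simp only [crossPolytopePoints, mem_filter, Fintype.mem_piFinset, mem_Icc, ← abs_le,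
    and_iff_right_iff_imp]
  exact fun h i => (single_le_sum (fun j _ => abs_nonneg (v j)) (mem_univ i)).trans h

theorem sum_crossPolytopePoints_succ {M : Type*} [AddCommMonoid M] (d r : ℕ)
    (f : (Fin (d + 1) → ℤ) → M) :
    ∑ v ∈ crossPolytopePoints (d + 1) r, f v =
      ∑ m ∈ Icc (-(r : ℤ)) r,
        ∑ w ∈ crossPolytopePoints d (r - m.natAbs), f (Fin.cons m w) := by
  rw [sum_sigma']
  refine sum_nbij' (fun v => ⟨v 0, Fin.tail v⟩) (fun p => Fin.cons p.1 p.2) ?_ ?_ ?_ ?_ ?_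
  · intro v hv
    simp only [mem_crossPolytopePoints, Fin.sum_univ_succ, mem_sigma, mem_Icc] at hv ⊢
    have : 0 ≤ ∑ i : Fin d, |v i.succ| := sum_nonneg fun i _ => abs_nonneg _
    rw [Int.abs_eq_natAbs] at hv
    exact ⟨by omega, by simp only [Fin.tail]; omega⟩
  · rintro ⟨m, w⟩ hp
    simp only [mem_crossPolytopePoints, Fin.sum_univ_succ, mem_sigma, mem_Icc] at hp ⊢
    simp only [Fin.cons_zero, Fin.cons_succ]
    rw [Int.abs_eq_natAbs]
    omega
  · intro v _
    exact Fin.cons_self_tail v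
  · rintro ⟨m, w⟩ _
    simp
  · intro v _
    rw [Fin.cons_self_tail]

theorem coeff_refinedEhrhartCross (d : ℕ) (a : Fin d → ℤ) (r : ℕ) :
    coeff r (refinedEhrhartCross d a) = ∑ v ∈ crossPolytopePoints d r, T (∑ i, v i * a i) :=
  coeff_mk _ _

theorem refinedEhrhartCross_zero (a : Fin 0 → ℤ) :
    refinedEhrhartCross 0 a = PowerSeries.mk 1 := by
  refine PowerSeries.ext fun r => ?_
  simp [coeff_refinedEhrhartCross, crossPolytopePoints]

theorem refinedEhrhartCross_succ (d : ℕ) (a : Fin (d + 1) → ℤ) :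
    refinedEhrhartCross (d + 1) a =
      twoSidedGeometric (a 0) * refinedEhrhartCross d (fun i => a i.succ) := by
  refine PowerSeries.ext fun r => ?_
  rw [coeff_mul, Nat.sum_antidiagonal_eq_sum_range_succ_mk, coeff_refinedEhrhartCross,
    sum_crossPolytopePoints_succ]
  simp only [Fin.sum_univ_succ, Fin.cons_zero, Fin.cons_succ, T_add, ← mul_sum]
  rw [sum_Icc_neg_eq_sum_range (M := ℤ[T;T⁻¹])]
  refine sum_congr rfl fun k _ => ?_
  rw [coeff_twoSidedGeometric, coeff_refinedEhrhartCross]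
  split_ifs with h0
  · simp [h0]
  · simp [add_mul]

theorem refinedEhrhartCross_mul_prod (d : ℕ) (a : Fin d → ℤ) :
    refinedEhrhartCross d a *
        ∏ j, ((1 - C (T (a j) : ℤ[T;T⁻¹]) * X) * (1 - C (T (-a j)) * X)) =
      PowerSeries.mk 1 * (1 - X ^ 2) ^ d := by
  induction d with
  | zero => simp [refinedEhrhartCross_zero]
  | succ d ih =>
    rw [refinedEhrhartCross_succ, Fin.prod_univ_succ, mul_mul_mul_comm, twoSidedGeometric_mul,
      ih, pow_succ]
    ring

/-- For every `d ≥ 1` and every `d`-tuple of integers `a`, the refined Ehrhart series of the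
`d`-dimensional cross-polytope satisfies
`E^a_{Ξ_d}(t,q) · ∏_{j=1}^d (1−q^{a_j} t)(1−q^{−a_j} t) = (1+t)^d (1−t)^{d−1}`. -/
theorem refinedEhrhart_cross (d : ℕ) (hd : 1 ≤ d) (a : Fin d → ℤ) :
    refinedEhrhartCross d a *
      ∏ j, ((1 - PowerSeries.C (R := LaurentPolynomial ℤ) (LaurentPolynomial.T (a j)) *
              PowerSeries.X) *
            (1 - PowerSeries.C (R := LaurentPolynomial ℤ) (LaurentPolynomial.T (-(a j))) *
              PowerSeries.X)) =
    (1 + PowerSeries.X) ^ d * (1 - PowerSeries.X) ^ (d - 1) := by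
  obtain ⟨e, rfl⟩ := Nat.exists_eq_add_of_le' hd
  calc refinedEhrhartCross (e + 1) a * _
      = PowerSeries.mk 1 * (1 - X ^ 2) ^ (e + 1) := refinedEhrhartCross_mul_prod (e + 1) a
    _ = PowerSeries.mk 1 * (1 - X) * ((1 + X) ^ (e + 1) * (1 - X) ^ e) := by
      rw [show (1 - X ^ 2 : ℤ[T;T⁻¹]⟦X⟧) = (1 + X) * (1 - X) by ring, mul_pow,
        pow_succ (1 - X)]
      ring
    _ = _ := by rw [mk_one_mul_one_sub_eq_one, one_mul, Nat.add_sub_cancel]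
end

section
/- For every d ≥ 1, the refined Ehrhart series of the d-dimensional cross-polytope for the weight vector a = (0,…,0,1) satisfies, in the power series ring (ℤ[q,q⁻¹])[[t]]: E^{(0,…,0,1)}_{Ξ_d}(t,q) · (1−qt)(1−q⁻¹t)(1−t)^{d−1} = (1+t)^d. -/
/-!
Splitting off the last coordinate `k` of a lattice point of `rΞ_d`, the remaining coordinates
range over the lattice points of `(r - |k|)Ξ_{d-1}`, so the series factors as
`(∑_{k ∈ ℤ} q^k t^{|k|}) · E_{Ξ_{d-1}}(t)`. The first factor is
`1/(1-qt) + 1/(1-q⁻¹t) - 1 = (1-t²)/((1-qt)(1-q⁻¹t))`, and the same factorisation at `q = 1`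
gives `E_{Ξ_d}(t) = (1+t)^d/(1-t)^{d+1}` by induction on `d`.
-/

/-- The refined Ehrhart series of the `d`-dimensional cross-polytope for the weight vector
`(0,…,0,1)`: the coefficient of `t^r` is `∑_{v ∈ ℤ^d, |v₁|+⋯+|v_d| ≤ r} q^{v_d}`. -/
noncomputable def refinedEhrhartCrossLast (d : ℕ) (hd : 1 ≤ d) :
    PowerSeries (LaurentPolynomial ℤ) :=
  PowerSeries.mk fun r : ℕ =>
    ∑ v ∈ (Fintype.piFinset fun _ : Fin d => Finset.Icc (-(r : ℤ)) (r : ℤ)).filter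
        (fun v => ∑ i, |v i| ≤ (r : ℤ)),
      LaurentPolynomial.T (v ⟨d - 1, by omega⟩)

open Finset PowerSeries

noncomputable def crossPoints (d r : ℕ) : Finset (Fin d → ℤ) :=
  {v ∈ Fintype.piFinset fun _ : Fin d => Icc (-(r : ℤ)) r | ∑ i, |v i| ≤ r}

theorem mem_crossPoints {d r : ℕ} {v : Fin d → ℤ} :
    v ∈ crossPoints d r ↔ ∑ i, |v i| ≤ r := by
  refine ⟨fun h => (mem_filter.mp h).2, fun h => mem_filter.mpr ⟨?_, h⟩⟩
  refine Fintype.mem_piFinset.mpr fun i => mem_Icc.mpr (abs_le.mp (le_trans ?_ h))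
  exact single_le_sum (fun j _ => abs_nonneg (v j)) (mem_univ i)

theorem card_crossPoints_zero (r : ℕ) : #(crossPoints 0 r) = 1 :=
  card_eq_one.mpr ⟨0, eq_singleton_iff_unique_mem.mpr
    ⟨mem_crossPoints.mpr (by simp), fun v _ => Subsingleton.elim v 0⟩⟩

theorem card_crossPoints_succ_last_fiber (d r : ℕ) {k : ℤ} (hk : k.natAbs ≤ r) :
    #{v ∈ crossPoints (d + 1) r | v (Fin.last d) = k} = #(crossPoints d (r - k.natAbs)) := by
  have hbound : ((r - k.natAbs : ℕ) : ℤ) = r - |k| := by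
    rw [Nat.cast_sub hk, Int.natCast_natAbs]
  refine card_nbij' Fin.init (Fin.snoc · k) (fun v hv => ?_) (fun u hu => ?_)
    (fun v hv => ?_) (fun u _ => Fin.init_snoc _ _)
  · rw [mem_coe, mem_filter] at hv
    obtain ⟨hv, rfl⟩ := hv
    rw [mem_crossPoints, Fin.sum_univ_castSucc] at hv
    rw [mem_coe, mem_crossPoints, hbound]
    exact le_sub_right_of_add_le hv
  · rw [mem_coe, mem_crossPoints, hbound] at hu
    rw [mem_coe, mem_filter, mem_crossPoints, Fin.sum_univ_castSucc]
    simp only [Fin.snoc_castSucc, Fin.snoc_last, and_true]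
    exact le_sub_iff_add_le.mp hu
  · obtain ⟨-, rfl⟩ := mem_filter.mp (mem_coe.mp hv)
    exact Fin.snoc_init_self v

theorem sum_crossPoints_succ_last {M : Type*} [AddCommMonoid M] (d r : ℕ) (f : ℤ → M) :
    ∑ v ∈ crossPoints (d + 1) r, f (v (Fin.last d)) =
      ∑ k ∈ Icc (-(r : ℤ)) r, #(crossPoints d (r - k.natAbs)) • f k := by
  have hmaps : ∀ v ∈ crossPoints (d + 1) r, v (Fin.last d) ∈ Icc (-(r : ℤ)) r := fun v hv =>
    mem_Icc.mpr ((Fintype.mem_piFinset.mp (mem_filter.mp hv).1) _ |> mem_Icc.mp)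
  rw [← sum_fiberwise_of_maps_to hmaps]
  refine sum_congr rfl fun k hk => ?_
  rw [sum_congr rfl fun v hv => congrArg f (mem_filter.mp hv).2, sum_const,
    card_crossPoints_succ_last_fiber d r (by rw [mem_Icc] at hk; omega)]

theorem sum_Icc_neg_eq_sum_range_sum_pair {M : Type*} [AddCommMonoid M] (r : ℕ) (g : ℤ → M) :
    ∑ k ∈ Icc (-(r : ℤ)) r, g k = ∑ j ∈ range (r + 1), ∑ k ∈ {(j : ℤ), -(j : ℤ)}, g k := by
  rw [← sum_fiberwise_of_maps_to (g := Int.natAbs) (t := range (r + 1))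
    fun k hk => by rw [mem_Icc] at hk; rw [mem_range]; omega]
  refine sum_congr rfl fun j hj => sum_congr ?_ fun _ _ => rfl
  ext k
  rw [mem_range] at hj
  simp only [mem_filter, mem_Icc, mem_insert, mem_singleton]
  omega

variable {R : Type*}

/-- `∑_{k ∈ ℤ} w k X^{|k|}`; at `j = 0` the pair `{j, -j}` collapses to `{0}`. -/
noncomputable def natAbsSeries [Semiring R] (w : ℤ → R) : R⟦X⟧ :=
  mk fun j => ∑ k ∈ {(j : ℤ), -(j : ℤ)}, w k

variable (R) in
noncomputable def crossEhrhartSeries [Semiring R] (d : ℕ) : R⟦X⟧ :=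
  mk fun r => (#(crossPoints d r) : R)

theorem mk_sum_crossPoints_succ_last [Semiring R] (d : ℕ) (w : ℤ → R) :
    mk (fun r => ∑ v ∈ crossPoints (d + 1) r, w (v (Fin.last d))) =
      natAbsSeries w * crossEhrhartSeries R d := by
  ext r
  rw [coeff_mk, coeff_mul, Nat.sum_antidiagonal_eq_sum_range_succ_mk, sum_crossPoints_succ_last,
    sum_Icc_neg_eq_sum_range_sum_pair]
  refine sum_congr rfl fun j _ => ?_
  simp only [natAbsSeries, crossEhrhartSeries, coeff_mk, sum_mul]
  refine sum_congr rfl fun k hk => ?_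
  have hj : k.natAbs = j := by
    simp only [mem_insert, mem_singleton] at hk
    omega
  rw [hj, nsmul_eq_mul']

theorem crossEhrhartSeries_succ [Semiring R] (d : ℕ) :
    crossEhrhartSeries R (d + 1) = natAbsSeries 1 * crossEhrhartSeries R d := by
  rw [← mk_sum_crossPoints_succ_last]
  simp [crossEhrhartSeries]

theorem natAbsSeries_eq [Ring R] (w : ℤ → R) :
    natAbsSeries w = mk (fun j : ℕ => w j) + mk (fun j : ℕ => w (-j)) - C (w 0) := by
  ext (_ | j)
  · simp [natAbsSeries]
  · rw [natAbsSeries, coeff_mk, sum_pair (by omega)]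
    simp

theorem mk_pow_mul_one_sub_C_mul_X [CommRing R] (a : R) : mk (a ^ ·) * (1 - C a * X) = 1 := by
  simpa [rescale_mk, rescale_X] using congrArg (rescale a) (mk_one_mul_one_sub_eq_one R)

theorem natAbsSeries_mul_of_pow [CommRing R] {w : ℤ → R} {a b : R}
    (ha : ∀ j : ℕ, w j = a ^ j) (hb : ∀ j : ℕ, w (-j) = b ^ j) :
    natAbsSeries w * ((1 - C a * X) * (1 - C b * X)) = 1 - C (a * b) * X ^ 2 := by
  have hpos : mk (fun j : ℕ => w j) = mk (a ^ ·) := by ext; simp [ha]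
  have hneg : mk (fun j : ℕ => w (-j)) = mk (b ^ ·) := by ext; simp [hb]
  have h0 : w 0 = 1 := by simpa using ha 0
  rw [natAbsSeries_eq, hpos, hneg, h0, map_one, map_mul]
  linear_combination (1 - C b * X) * mk_pow_mul_one_sub_C_mul_X a +
    (1 - C a * X) * mk_pow_mul_one_sub_C_mul_X b

theorem crossEhrhartSeries_mul_one_sub_X_pow [CommRing R] (d : ℕ) :
    crossEhrhartSeries R d * (1 - X) ^ (d + 1) = (1 + X) ^ d := by
  induction d with
  | zero =>
    simp only [crossEhrhartSeries, card_crossPoints_zero, Nat.cast_one, zero_add, pow_one, pow_zero]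
    exact mk_one_mul_one_sub_eq_one R
  | succ d ih =>
    have hS := natAbsSeries_mul_of_pow (w := (1 : ℤ → R)) (a := 1) (b := 1) (by simp) (by simp)
    rw [map_one, mul_one, map_one, one_mul] at hS
    rw [crossEhrhartSeries_succ]
    linear_combination crossEhrhartSeries R d * (1 - X) ^ d * hS + (1 + X) * ih

/-- For every `d ≥ 1`, the refined Ehrhart series of the `d`-dimensional cross-polytope for
the weight vector `(0,…,0,1)` satisfies
`E^{(0,…,0,1)}_{Ξ_d}(t,q) · (1−qt)(1−q⁻¹t)(1−t)^{d−1} = (1+t)^d`. -/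
theorem refinedEhrhart_cross_last (d : ℕ) (hd : 1 ≤ d) :
    refinedEhrhartCrossLast d hd *
      ((1 - PowerSeries.C (R := LaurentPolynomial ℤ) (LaurentPolynomial.T 1) * PowerSeries.X) *
       (1 - PowerSeries.C (R := LaurentPolynomial ℤ) (LaurentPolynomial.T (-1)) * PowerSeries.X) *
       (1 - PowerSeries.X) ^ (d - 1)) =
    (1 + PowerSeries.X) ^ d := by
  obtain ⟨e, rfl⟩ : ∃ e, d = e + 1 := ⟨d - 1, by omega⟩
  -- by unfolding: the index `⟨e + 1 - 1, _⟩` is `Fin.last e` definitionally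
  have hE : refinedEhrhartCrossLast (e + 1) hd =
      natAbsSeries LaurentPolynomial.T * crossEhrhartSeries _ e :=
    mk_sum_crossPoints_succ_last e _
  have hS := natAbsSeries_mul_of_pow (R := LaurentPolynomial ℤ) (w := LaurentPolynomial.T)
    (a := LaurentPolynomial.T 1) (b := LaurentPolynomial.T (-1))
    (fun j => by rw [LaurentPolynomial.T_pow, mul_one])
    (fun j => by rw [LaurentPolynomial.T_pow, mul_neg_one])
  rw [← LaurentPolynomial.T_add, add_neg_cancel, LaurentPolynomial.T_zero, map_one, one_mul] at hS
  rw [hE, Nat.add_sub_cancel]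
  linear_combination crossEhrhartSeries _ e * (1 - X) ^ e * hS +
    (1 + X) * crossEhrhartSeries_mul_one_sub_X_pow (R := LaurentPolynomial ℤ) e
end

section
/- For all integers a and b, the refined Ehrhart series of the unit square satisfies, in the power series ring (ℤ[q,q⁻¹])[[t]]: E^{(a,b)}_{C_2}(t,q) · (1−t)(1−q^a t)(1−q^b t)(1−q^{a+b} t) = 1 − q^{a+b} t². -/
/-!
With `α = q^a` and `β = q^b`, the `r`-th coefficient is `[r+1]_α [r+1]_β`, where
`[n]_x = 1 + x + ⋯ + x^(n-1)`. Multiplying by `1 - t` leaves the weights of the hook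
`max(i, j) = r`, namely `α^r [r+1]_β + β^r [r]_α`; multiplying that by `1 - αβt` telescopes
each arm to its corner, leaving `α^r + β^r` for `r ≥ 1`. Hence
`E · (1 - t)(1 - αβt) = 1/(1 - αt) + 1/(1 - βt) - 1`, and clearing the two remaining
denominators gives `(1 - βt) + (1 - αt) - (1 - αt)(1 - βt) = 1 - αβt²`.
-/

/-- The refined Ehrhart series of the unit square with respect to integer weights `(a,b)`:
the coefficient of `t^r` is `∑_{0 ≤ i,j ≤ r} q^{ia+jb}`, a Laurent polynomial in `q`. -/
noncomputable def refinedEhrhartSquare (a b : ℤ) : PowerSeries (LaurentPolynomial ℤ) :=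
  PowerSeries.mk fun r : ℕ =>
    ∑ i ∈ Finset.range (r + 1), ∑ j ∈ Finset.range (r + 1),
      LaurentPolynomial.T ((i : ℤ) * a + (j : ℤ) * b)

open PowerSeries Finset

namespace PowerSeries

variable {R : Type*} [CommRing R]

theorem coeff_succ_mul_one_sub_C_mul_X (f : R⟦X⟧) (c : R) (n : ℕ) :
    coeff (n + 1) (f * (1 - C c * X)) = coeff (n + 1) f - c * coeff n f := by
  rw [mul_sub, mul_one, map_sub, ← mul_assoc, mul_comm f, mul_assoc, coeff_C_mul,
    coeff_succ_mul_X]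

theorem mk_pow_mul_one_sub_C_mul_X (x : R) : mk (x ^ ·) * (1 - C x * X) = 1 := by
  ext (_ | n)
  · simp
  · rw [coeff_succ_mul_one_sub_C_mul_X, coeff_mk, coeff_mk, coeff_one, if_neg n.succ_ne_zero,
      pow_succ', sub_self]

noncomputable def geomSquare (α β : R) : R⟦X⟧ :=
  mk fun r => (∑ i ∈ range (r + 1), α ^ i) * ∑ j ∈ range (r + 1), β ^ j

theorem geomSquare_mul_one_sub_X (α β : R) :
    geomSquare α β * (1 - X) =
      mk fun r => α ^ r * (∑ j ∈ range (r + 1), β ^ j) + β ^ r * ∑ i ∈ range r, α ^ i := by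
  rw [show (1 - X : R⟦X⟧) = 1 - C 1 * X by rw [map_one, one_mul]]
  ext (_ | n)
  · simp [geomSquare]
  · rw [coeff_succ_mul_one_sub_C_mul_X]
    simp only [geomSquare, coeff_mk, geom_sum_succ' (n := n + 1)]
    ring

theorem geomSquare_mul_one_sub_X_mul_one_sub_C_mul_X (α β : R) :
    geomSquare α β * (1 - X) * (1 - C (α * β) * X) = mk (α ^ ·) + mk (β ^ ·) - 1 := by
  rw [geomSquare_mul_one_sub_X]
  ext (_ | n)
  · simp
  · rw [coeff_succ_mul_one_sub_C_mul_X]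
    simp only [coeff_mk, map_sub, map_add, coeff_one, if_neg n.succ_ne_zero,
      geom_sum_succ (n := n + 1), geom_sum_succ (n := n)]
    ring

theorem geomSquare_mul (α β : R) :
    geomSquare α β * ((1 - X) * (1 - C α * X) * (1 - C β * X) * (1 - C (α * β) * X)) =
      1 - C (α * β) * X ^ 2 := by
  have hα := mk_pow_mul_one_sub_C_mul_X α
  have hβ := mk_pow_mul_one_sub_C_mul_X β
  have hαβ := geomSquare_mul_one_sub_X_mul_one_sub_C_mul_X α β
  rw [map_mul] at hαβ ⊢
  linear_combination (1 - C α * X) * (1 - C β * X) * hαβ + (1 - C β * X) * hα +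
    (1 - C α * X) * hβ

end PowerSeries

theorem refinedEhrhartSquare_eq_geomSquare (a b : ℤ) :
    refinedEhrhartSquare a b = geomSquare (LaurentPolynomial.T a) (LaurentPolynomial.T b) := by
  simp only [refinedEhrhartSquare, geomSquare, sum_mul_sum, LaurentPolynomial.T_pow,
    ← LaurentPolynomial.T_add]

/-- For all integers `a, b`, the refined Ehrhart series of the unit square satisfies
`E^{(a,b)}_{C_2}(t,q) · (1−t)(1−q^a t)(1−q^b t)(1−q^{a+b} t) = 1 − q^{a+b} t²`. -/
theorem refinedEhrhart_square (a b : ℤ) :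
    refinedEhrhartSquare a b *
      ((1 - PowerSeries.X) *
       (1 - PowerSeries.C (R := LaurentPolynomial ℤ) (LaurentPolynomial.T a) * PowerSeries.X) *
       (1 - PowerSeries.C (R := LaurentPolynomial ℤ) (LaurentPolynomial.T b) * PowerSeries.X) *
       (1 - PowerSeries.C (R := LaurentPolynomial ℤ) (LaurentPolynomial.T (a + b)) *
         PowerSeries.X)) =
    1 - PowerSeries.C (R := LaurentPolynomial ℤ) (LaurentPolynomial.T (a + b)) *
      PowerSeries.X ^ 2 := by
  rw [refinedEhrhartSquare_eq_geomSquare, LaurentPolynomial.T_add, geomSquare_mul]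
end

section
/- For all integers a and b, the following identity holds in the power series ring (ℤ[q,q⁻¹])[[t]]: (∑_{r≥0} [r+1]_{q^a} [r+1]_{q^b} t^r) · (1−t)(1−q^a t)(1−q^b t)(1−q^{a+b} t) = 1 − q^{a+b} t². -/
/-!
Write `a_r = [r+1]_x` and `b_r = [r+1]_y`, so that `a_r = x a_{r-1} + 1` with `a_{-1} = 0`.
Then `a_r b_r - xy a_{r-1} b_{r-1} = a_r + b_r - 1`, i.e. multiplying the series by `1 - xyt`
turns it into `A + B - 1/(1-t)`, where `A = 1/((1-t)(1-xt))` and `B = 1/((1-t)(1-yt))`.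
Multiplying by the remaining three factors gives `(1-yt) + (1-xt) - (1-xt)(1-yt) = 1 - xyt²`.
-/

/-- The `q`-integer `[k]_{q^a} = ∑_{i=0}^{k−1} q^{ia}` as a Laurent polynomial in `q`. -/
noncomputable def qInt (a : ℤ) (k : ℕ) : LaurentPolynomial ℤ :=
  ∑ i ∈ Finset.range k, LaurentPolynomial.T ((i : ℤ) * a)

open Finset PowerSeries

namespace PowerSeries

variable {R : Type*} [CommRing R]

theorem mk_mul_one_sub_C_mul_X {c : R} {u v : ℕ → R} (h0 : u 0 = v 0)
    (hsucc : ∀ n, u (n + 1) - c * u n = v (n + 1)) : mk u * (1 - C c * X) = mk v := by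
  ext (_ | n)
  · simp [h0]
  · simp [mul_sub, ← mul_assoc, mul_comm _ (C c), coeff_succ_mul_X, hsucc]

noncomputable def geomSumSeries (x : R) : R⟦X⟧ :=
  mk fun r => ∑ i ∈ range (r + 1), x ^ i

theorem geomSumSeries_mul_one_sub_C_mul_X (x : R) :
    geomSumSeries x * (1 - C x * X) = mk 1 :=
  mk_mul_one_sub_C_mul_X (by simp) fun n => by
    rw [geom_sum_succ (n := n + 1)]
    simp

theorem geomSumSeries_mul_prod (x : R) :
    geomSumSeries x * ((1 - X) * (1 - C x * X)) = 1 := by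
  rw [mul_left_comm, geomSumSeries_mul_one_sub_C_mul_X, mul_comm, mk_one_mul_one_sub_eq_one]

theorem mk_geom_sum_mul_geom_sum_mul_one_sub_C_mul_X (x y : R) :
    (mk fun r => (∑ i ∈ range (r + 1), x ^ i) * ∑ i ∈ range (r + 1), y ^ i) *
        (1 - C (x * y) * X) =
      geomSumSeries x + geomSumSeries y - mk 1 := by
  have hsum : geomSumSeries x + geomSumSeries y - mk 1 =
      mk fun r => (∑ i ∈ range (r + 1), x ^ i) + (∑ i ∈ range (r + 1), y ^ i) - 1 := by
    ext; simp [geomSumSeries]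
  rw [hsum]
  refine mk_mul_one_sub_C_mul_X (by simp) fun n => ?_
  simp only [geom_sum_succ (n := n + 1)]
  ring

theorem mk_geom_sum_mul_geom_sum_mul_prod (x y : R) :
    (mk fun r => (∑ i ∈ range (r + 1), x ^ i) * ∑ i ∈ range (r + 1), y ^ i) *
        ((1 - X) * (1 - C x * X) * (1 - C y * X) * (1 - C (x * y) * X)) =
      1 - C (x * y) * X ^ 2 := by
  calc _ = (geomSumSeries x + geomSumSeries y - mk 1) *
        ((1 - X) * (1 - C x * X) * (1 - C y * X)) := by
        rw [← mk_geom_sum_mul_geom_sum_mul_one_sub_C_mul_X]; ring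
    _ = geomSumSeries x * ((1 - X) * (1 - C x * X)) * (1 - C y * X) +
          geomSumSeries y * ((1 - X) * (1 - C y * X)) * (1 - C x * X) -
          mk 1 * (1 - X) * ((1 - C x * X) * (1 - C y * X)) := by ring
    _ = 1 - C (x * y) * X ^ 2 := by
        rw [geomSumSeries_mul_prod, geomSumSeries_mul_prod, mk_one_mul_one_sub_eq_one, map_mul]
        ring

end PowerSeries

theorem qInt_eq_geom_sum (a : ℤ) (k : ℕ) :
    qInt a k = ∑ i ∈ range k, LaurentPolynomial.T a ^ i := by
  simp [qInt, LaurentPolynomial.T_pow]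

/-- For all integers `a, b`:
`(∑_{r≥0} [r+1]_{q^a} [r+1]_{q^b} t^r) · (1−t)(1−q^a t)(1−q^b t)(1−q^{a+b} t) = 1 − q^{a+b} t²`
as formal power series in `t` with coefficients in `ℤ[q,q⁻¹]`. -/
theorem qInt_product_series (a b : ℤ) :
    (PowerSeries.mk fun r : ℕ => qInt a (r + 1) * qInt b (r + 1)) *
      ((1 - PowerSeries.X) *
       (1 - PowerSeries.C (R := LaurentPolynomial ℤ) (LaurentPolynomial.T a) * PowerSeries.X) *
       (1 - PowerSeries.C (R := LaurentPolynomial ℤ) (LaurentPolynomial.T b) * PowerSeries.X) *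
       (1 - PowerSeries.C (R := LaurentPolynomial ℤ) (LaurentPolynomial.T (a + b)) *
         PowerSeries.X)) =
    1 - PowerSeries.C (R := LaurentPolynomial ℤ) (LaurentPolynomial.T (a + b)) *
      PowerSeries.X ^ 2 := by
  simp only [qInt_eq_geom_sum, LaurentPolynomial.T_add]
  exact mk_geom_sum_mul_geom_sum_mul_prod _ _
end

section
/- Let d ≥ 1, let S = ℂ[x_v : v ∈ {0,1}^d], let I_{C_d} ⊆ S be the ideal generated by all binomials x_v x_w − x_{v'} x_{w'} with v + w = v' + w' in ℤ^d, let R_{C_d} = S/I_{C_d}, and for 0 ≤ k ≤ d let y_k = ∑_{v ∈ {0,1}^d, v_1+⋯+v_d = k} x_v. Then the quotient ring T_{C_d} = R_{C_d}/([y_0], [y_1], …, [y_d]) is a finite-dimensional ℂ-vector space. -/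
open MvPolynomial

/-- The toric ideal `I_{C_d}` of the embedding `(ℙ¹)^d ↪ ℙ^{2^d−1}`, inside the polynomial
ring `S = ℂ[x_v : v ∈ {0,1}^d]`: it is generated by the binomials
`x_v x_w − x_{v'} x_{w'}` with `v + w = v' + w'` componentwise in `ℤ^d`. -/
noncomputable def cubeIdeal (d : ℕ) : Ideal (MvPolynomial (Fin d → Fin 2) ℂ) :=
  Ideal.span { p | ∃ v w v' w' : Fin d → Fin 2,
    (∀ i, (v i : ℕ) + (w i : ℕ) = (v' i : ℕ) + (w' i : ℕ)) ∧
    p = X v * X w - X v' * X w' }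

/-- The element `y_k ∈ S`: the sum of all variables `x_v` with coordinate sum
`v₁ + ⋯ + v_d = k`. -/
noncomputable def cubeY (d k : ℕ) : MvPolynomial (Fin d → Fin 2) ℂ :=
  ∑ v ∈ Finset.univ.filter (fun v : Fin d → Fin 2 => ∑ i, (v i : ℕ) = k), X v

/-!
Every variable `x_v` is nilpotent in `T_{C_d}`, which for a finitely generated algebra gives
finite dimension. Order `{0,1}^d` componentwise and induct on `v`. If `v` has coordinate sum `k`,
then `0 = x_v y_k = x_v² + ∑ x_v x_w` over the other `w` with coordinate sum `k`, and the binomial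
relations turn `x_v x_w` into `x_{v ∧ w} x_{v ∨ w}`, where `v ∧ w < v`. So `x_v²` is nilpotent.
-/

theorem IsNilpotent.of_mul_add_self {R : Type*} [CommRing R] {x s : R}
    (h : IsNilpotent (x * (x + s))) (hs : IsNilpotent (x * s)) : IsNilpotent x := by
  have hsq : x ^ 2 = x * (x + s) - x * s := by ring
  exact (hsq ▸ (Commute.all _ _).isNilpotent_sub h hs : IsNilpotent (x ^ 2)).of_pow

theorem IsNilpotent.isIntegral {R A : Type*} [CommRing R] [Ring A] [Algebra R A] {x : A}
    (hx : IsNilpotent x) : IsIntegral R x := by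
  obtain ⟨n, hn⟩ := hx
  exact ⟨Polynomial.X ^ n, Polynomial.monic_X_pow n, by simp [hn]⟩

theorem MvPolynomial.finite_quotient_of_isNilpotent_X {R σ : Type*} [CommRing R] [Finite σ]
    {I : Ideal (MvPolynomial σ R)} (h : ∀ i, IsNilpotent (Ideal.Quotient.mk I (X i))) :
    Module.Finite R (MvPolynomial σ R ⧸ I) := by
  have htop : Algebra.adjoin R (Ideal.Quotient.mkₐ R I '' Set.range X) = ⊤ := by
    rw [← AlgHom.map_adjoin, adjoin_range_X, Algebra.map_top, AlgHom.range_eq_top]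
    exact Ideal.Quotient.mkₐ_surjective R I
  have hfg := fg_adjoin_of_finite ((Set.finite_range X).image (Ideal.Quotient.mkₐ R I))
    (by rintro _ ⟨_, ⟨i, rfl⟩, rfl⟩; exact (h i).isIntegral (R := R))
  exact ⟨by rwa [htop, Algebra.top_toSubmodule] at hfg⟩

section Cube

variable {d : ℕ}

def cubeWeight (v : Fin d → Fin 2) : ℕ := ∑ i, (v i : ℕ)

theorem cubeWeight_strictMono : StrictMono (cubeWeight (d := d)) := by
  intro v w hvw
  obtain ⟨hle, i, hi⟩ := Pi.lt_def.1 hvw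
  exact Finset.sum_lt_sum (fun j _ => hle j) ⟨i, Finset.mem_univ i, hi⟩

theorem cubeWeight_le (v : Fin d → Fin 2) : cubeWeight v ≤ d :=
  calc ∑ i, (v i : ℕ) ≤ ∑ _i : Fin d, 1 :=
        Finset.sum_le_sum fun i _ => Nat.lt_succ_iff.mp (v i).isLt
    _ = d := by simp

theorem inf_lt_left_of_cubeWeight_eq {v w : Fin d → Fin 2} (hne : v ≠ w)
    (h : cubeWeight v = cubeWeight w) : v ⊓ w < v := by
  refine inf_le_left.lt_of_ne fun hinf => ?_
  exact (cubeWeight_strictMono ((inf_eq_left.1 hinf).lt_of_ne hne)).ne h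

theorem X_mul_X_sub_X_inf_mul_X_sup_mem_cubeIdeal (v w : Fin d → Fin 2) :
    X v * X w - X (v ⊓ w) * X (v ⊔ w) ∈ cubeIdeal d :=
  Ideal.subset_span ⟨v, w, v ⊓ w, v ⊔ w, fun i => by simp, rfl⟩

end Cube

noncomputable def cubeTIdeal (d : ℕ) : Ideal (MvPolynomial (Fin d → Fin 2) ℂ) :=
  cubeIdeal d ⊔ Ideal.span ((fun j : Fin (d + 1) => cubeY d j) '' Set.univ)

theorem cubeY_cubeWeight_mem_cubeTIdeal {d : ℕ} (v : Fin d → Fin 2) :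
    cubeY d (cubeWeight v) ∈ cubeTIdeal d :=
  Ideal.mem_sup_right <| Ideal.subset_span
    ⟨⟨cubeWeight v, Nat.lt_succ_of_le (cubeWeight_le v)⟩, Set.mem_univ _, rfl⟩

theorem isNilpotent_mk_cubeTIdeal_X {d : ℕ} (v : Fin d → Fin 2) :
    IsNilpotent (Ideal.Quotient.mk (cubeTIdeal d) (X v)) := by
  induction v using WellFoundedLT.induction with
  | _ v ih =>
  set π := Ideal.Quotient.mk (cubeTIdeal d)
  set layer := Finset.univ.filter fun w : Fin d → Fin 2 => cubeWeight w = cubeWeight v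
  have hy : π (X v) + ∑ w ∈ layer.erase v, π (X w) = 0 := by
    rw [← map_sum, ← map_add, Finset.add_sum_erase _ _ (by simp [layer]),
      Ideal.Quotient.eq_zero_iff_mem]
    exact cubeY_cubeWeight_mem_cubeTIdeal v
  refine IsNilpotent.of_mul_add_self (by rw [hy, mul_zero]; exact IsNilpotent.zero) ?_
  rw [Finset.mul_sum]
  refine isNilpotent_sum fun w hw => ?_
  obtain ⟨hwv, hw_layer⟩ := Finset.mem_erase.1 hw
  have hswap : π (X v) * π (X w) = π (X (v ⊓ w)) * π (X (v ⊔ w)) := by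
    simp only [← map_mul]
    exact Ideal.Quotient.eq.2 <|
      Ideal.mem_sup_left (X_mul_X_sub_X_inf_mul_X_sup_mem_cubeIdeal v w)
  rw [hswap]
  exact (Commute.all _ _).isNilpotent_mul_right <|
    ih _ (inf_lt_left_of_cubeWeight_eq hwv.symm (Finset.mem_filter.1 hw_layer).2.symm)

theorem cubeT_finiteDimensional_general (d : ℕ) :
    FiniteDimensional ℂ
      (MvPolynomial (Fin d → Fin 2) ℂ ⧸
        (cubeIdeal d ⊔ Ideal.span ((fun j : Fin (d + 1) => cubeY d j) '' Set.univ))) :=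
  MvPolynomial.finite_quotient_of_isNilpotent_X isNilpotent_mk_cubeTIdeal_X

/-- The quotient `T_{C_d} = R_{C_d}/([y_0],…,[y_d]) = S/(I_{C_d} + (y_0,…,y_d))` is a
finite-dimensional `ℂ`-vector space. -/
theorem cubeT_finiteDimensional (d : ℕ) (hd : 1 ≤ d) :
    FiniteDimensional ℂ
      (MvPolynomial (Fin d → Fin 2) ℂ ⧸
        (cubeIdeal d ⊔ Ideal.span ((fun j : Fin (d + 1) => cubeY d j) '' Set.univ))) :=
  cubeT_finiteDimensional_general d
end
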